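/- Let A be an ample effective Weil divisor on ℙ¹ × ℙ¹ whose support is contained in a finite union of crosses ⊞_S (unions of a vertical line {a} × ℙ¹ and a horizontal line ℙ¹ × {b}) for a finite set S. Then the support of A equals the union of crosses anchored at the singular points of Supp A; i.e., Supp A = ⊞_{Sing(Supp A)}. -/
import Mathlib


/-!
STATEMENT 1: Let `A` be an ample effective Weil divisor on `ℙ¹ × ℙ¹` whose support is
contained in a finite union of crosses `⊞_S` for a finite set `S`.  Then
`Supp A = ⊞_{Sing (Supp A)}`.

Formalization notes.  `P1` is the projective line over `ℂ`.  A Weil divisor on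
`ℙ¹ × ℙ¹` whose support is contained in a finite union of crosses is exactly an
effective finite formal sum of vertical lines `{a} × ℙ¹` and horizontal lines
`ℙ¹ × {b}`; we encode such a divisor as a finitely supported function
`A : P1 ⊕ P1 →₀ ℕ`, where `Sum.inl a` indexes the vertical line `{a} × ℙ¹` and
`Sum.inr b` the horizontal line `ℙ¹ × {b}`.  Such a divisor is of type `(m, n)` with
`m` (resp. `n`) the total multiplicity of horizontal (resp. vertical) components, and
it is ample iff `m > 0` and `n > 0`, i.e. iff `A` has at least one vertical and one
horizontal component; this is the hypothesis `hample`.  For a set which is a union of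
vertical and horizontal lines, its singular locus is the set of points through which
both the vertical and the horizontal line lie inside the set (the crossing points).
-/

noncomputable section

/-- The projective line `ℙ¹` over `ℂ`. -/
abbrev P1 := Projectivization ℂ (Fin 2 → ℂ)

/-- The cross anchored at a point `p ∈ ℙ¹ × ℙ¹` : `({p.1} × ℙ¹) ∪ (ℙ¹ × {p.2})`. -/
def cross (p : P1 × P1) : Set (P1 × P1) := {q | q.1 = p.1 ∨ q.2 = p.2}

/-- The union of crosses anchored in a subset `S ⊆ ℙ¹ × ℙ¹`. -/
def crossUnion (S : Set (P1 × P1)) : Set (P1 × P1) := ⋃ p ∈ S, cross p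

/-- The singular locus of a (closed) subset of `ℙ¹ × ℙ¹` which is a union of vertical
and horizontal lines: the points through which both the vertical line and the
horizontal line are contained in the set. -/
def crossSing (T : Set (P1 × P1)) : Set (P1 × P1) :=
  {p | (∀ y : P1, (p.1, y) ∈ T) ∧ (∀ x : P1, (x, p.2) ∈ T)}

/-- The support of the divisor `A`: the union of its vertical and horizontal
component lines. -/
def divSupp (A : P1 ⊕ P1 →₀ ℕ) : Set (P1 × P1) :=
  {q | A (Sum.inl q.1) ≠ 0 ∨ A (Sum.inr q.2) ≠ 0}

lemma P1_infinite : Infinite P1 := by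
  refine Infinite.of_injective (fun c : ℂ => Projectivization.mk ℂ ![1, c] ?_) ?_
  · intro h
    have := congrFun h 0
    simp at this
  · intro c d h
    rw [Projectivization.mk_eq_mk_iff] at h
    obtain ⟨a, ha⟩ := h
    have h0 := congrFun ha 0
    have h1 := congrFun ha 1
    simp [Pi.smul_apply, Units.smul_def, smul_eq_mul] at h0 h1
    rw [h0] at h1
    simpa using h1.symm

theorem supp_ample_divisor_in_crosses_eq_crosses_of_sing
    (A : P1 ⊕ P1 →₀ ℕ)
    -- `A` is ample: it has type `(m, n)` with `m > 0` and `n > 0`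
    (hample : (∃ a, A (Sum.inl a) ≠ 0) ∧ (∃ b, A (Sum.inr b) ≠ 0))
    -- the support of `A` is contained in `⊞_S` for some finite set `S`
    (S : Set (P1 × P1)) (hS : S.Finite) (hsupp : divSupp A ⊆ crossUnion S) :
    divSupp A = crossUnion (crossSing (divSupp A)) := by
  haveI : Infinite P1 := P1_infinite
  -- there exist points avoiding the support
  have hy : ∃ y : P1, A (Sum.inr y) = 0 := by
    have hfin : {y : P1 | A (Sum.inr y) ≠ 0}.Finite := by
      have : {y : P1 | A (Sum.inr y) ≠ 0} = Sum.inr ⁻¹' (↑A.support : Set (P1 ⊕ P1)) := by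
        ext y; simp [Finsupp.mem_support_iff]
      rw [this]
      exact (A.support.finite_toSet).preimage Sum.inr_injective.injOn
    obtain ⟨y, hy⟩ := hfin.infinite_compl.nonempty
    exact ⟨y, not_not.mp hy⟩
  have hx : ∃ x : P1, A (Sum.inl x) = 0 := by
    have hfin : {x : P1 | A (Sum.inl x) ≠ 0}.Finite := by
      have : {x : P1 | A (Sum.inl x) ≠ 0} = Sum.inl ⁻¹' (↑A.support : Set (P1 ⊕ P1)) := by
        ext x; simp [Finsupp.mem_support_iff]
      rw [this]
      exact (A.support.finite_toSet).preimage Sum.inl_injective.injOn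
    obtain ⟨x, hx⟩ := hfin.infinite_compl.nonempty
    exact ⟨x, not_not.mp hx⟩
  obtain ⟨y0, hy0⟩ := hy
  obtain ⟨x0, hx0⟩ := hx
  -- characterize the singular locus
  have hsing : crossSing (divSupp A) =
      {p : P1 × P1 | A (Sum.inl p.1) ≠ 0 ∧ A (Sum.inr p.2) ≠ 0} := by
    ext p
    constructor
    · rintro ⟨h1, h2⟩
      constructor
      · rcases h1 y0 with h | h
        · exact h
        · exact absurd hy0 h
      · rcases h2 x0 with h | h
        · exact absurd hx0 h
        · exact h
    · rintro ⟨h1, h2⟩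
      exact ⟨fun y => Or.inl h1, fun x => Or.inr h2⟩
  obtain ⟨⟨a, ha⟩, ⟨b, hb⟩⟩ := hample
  rw [hsing]
  ext q
  simp only [crossUnion, Set.mem_iUnion, Set.mem_setOf_eq, cross, divSupp]
  constructor
  · rintro (h | h)
    · exact ⟨(q.1, b), ⟨h, hb⟩, Or.inl rfl⟩
    · exact ⟨(a, q.2), ⟨ha, h⟩, Or.inr rfl⟩
  · rintro ⟨p, ⟨h1, h2⟩, h | h⟩
    · exact Or.inl (h ▸ h1)
    · exact Or.inr (h ▸ h2)
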